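/- arXiv:1001.3195 — 2 statements merged into one kernel-verified Lean document; each statement's English description precedes it below -/
import Mathlib

section
/- Let Δ be a simplicial complex on [m] and A ⊊ [m] a proper subset, and let Δ_A = {F ∈ Δ : F ⊆ A} be the induced subcomplex. If a symmetric matrix Σ lies in the image of φ_Δ, then the principal submatrix Σ_{A,A} lies in the image of φ_{Δ_A}. -/
open Matrix

/-- `Δ` is a simplicial complex with ground set all of `V`: it is closed under
taking subsets and every vertex lies in some face. -/
def IsSimplicialComplex {V : Type*} [Fintype V] [DecidableEq V]
    (Δ : Finset (Finset V)) : Prop :=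
  (∀ F ∈ Δ, ∀ F', F' ⊆ F → F' ∈ Δ) ∧ ∀ i : V, ∃ F ∈ Δ, i ∈ F

/-- The parametrization `φ_Δ`, sending `γ = (γ_{i,F})` to the matrix with entries
`φ_Δ(γ)_{ij} = ∑_{F ∈ Δ : i,j ∈ F} γ_{i,F} γ_{j,F}`. -/
def phi {V : Type*} [Fintype V] [DecidableEq V] (Δ : Finset (Finset V))
    (γ : Finset V → V → ℝ) : Matrix V V ℝ :=
  Matrix.of fun i j => ∑ F ∈ Δ, if i ∈ F ∧ j ∈ F then γ F i * γ F j else 0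

/-- The image of the parametrization `φ_Δ`. -/
def phiImage {V : Type*} [Fintype V] [DecidableEq V] (Δ : Finset (Finset V)) :
    Set (Matrix V V ℝ) :=
  Set.range (phi Δ)

/-
Restricted to `A`, the face `F` of `Δ` contributes to `Σ_{A,A}` the rank-one matrix of `γ_F`
restricted to `F ∩ A`, a face of `Δ_A`; so `Σ_{A,A}` is a sum of PSD matrices, each supported on a
face of `Δ_A`. Every such sum over a downward-closed family `S` lies in the image of `φ_S`: take a
maximal face `G` and one Cholesky step of its matrix at a pivot `i ∈ G`. This yields a rank-one
term on `G`, which becomes `γ_G`, and a PSD remainder supported on `G \ {i}`, which is again a face;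
add the remainder to the matrix of that face and induct on the number of faces.
-/

open Finset

namespace Matrix.PosSemidef

variable {V : Type*} [Fintype V] [DecidableEq V] {M : Matrix V V ℝ}

lemma row_eq_zero_of_diag_eq_zero (hM : M.PosSemidef) {i : V} (hi : M i i = 0) : M i = 0 := by
  have hcol := (hM.dotProduct_mulVec_zero_iff (Pi.single i 1)).mp (by simpa using hi)
  ext j
  rw [← hM.isHermitian.apply]
  simpa using congrFun hcol j

/-- One step of Cholesky factorization, with pivot `i`. -/
lemma exists_eq_vecMulVec_add (hM : M.PosSemidef) {G : Finset V}
    (hG : Function.support M ⊆ G) (i : V) :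
    ∃ v : V → ℝ, Function.support v ⊆ G ∧ ∃ M' : Matrix V V ℝ, M'.PosSemidef ∧
      Function.support M' ⊆ G.erase i ∧ M = vecMulVec v v + M' := by
  have hsym : ∀ j k, M j k = M k j := fun j k => by rw [← hM.isHermitian.apply j k]; simp
  rcases hM.diag_nonneg.eq_or_lt with hi | hi
  · refine ⟨0, by simp, M, hM, fun j hj => mem_erase.mpr ⟨?_, hG hj⟩, by simp⟩
    rintro rfl
    exact hj (hM.row_eq_zero_of_diag_eq_zero hi.symm)
  set d := M i i
  -- The Schur complement of the pivot `d` is a congruence transform of `M`.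
  set P : Matrix V V ℝ := 1 - d⁻¹ • vecMulVec (Pi.single i 1) (M i)
  have hschur : Pᴴ * M * P = M - d⁻¹ • vecMulVec (M i) (M i) := by
    ext j k
    simp only [P, d, conjTranspose_eq_transpose_of_trivial, transpose_sub, transpose_one,
      transpose_smul, transpose_vecMulVec, sub_mul, mul_sub, one_mul, Algebra.smul_mul_assoc,
      mul_apply, sub_apply, smul_apply, vecMulVec_apply, Pi.single_apply, mul_ite, mul_one, mul_zero,
      ite_mul, zero_mul, sum_ite_eq', mem_univ, ↓reduceIte, smul_eq_mul, one_apply,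
      sum_sub_distrib, sub_eq_self]
    rw [hsym i j]
    field_simp
    ring
  have hrow : ∀ j ∉ G, M j = 0 := fun j hj => Function.notMem_support.mp (hj ∘ (hG ·))
  refine ⟨(√d)⁻¹ • M i, ?_, Pᴴ * M * P, hM.conjTranspose_mul_mul_same P, ?_, ?_⟩
  · intro j hj
    by_contra hjG
    apply hj
    simp [hsym i j, hrow j hjG]
  · intro j hj
    rw [hschur] at hj
    by_contra hjG
    apply hj
    ext k
    rcases eq_or_ne j i with rfl | hji
    · simp [vecMulVec_apply, d, hi.ne']
    · have hjG : j ∉ G := fun h => hjG (mem_erase.mpr ⟨hji, h⟩)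
      simp [vecMulVec_apply, hsym i j, hrow j hjG]
  · rw [hschur, vecMulVec_smul, smul_vecMulVec, smul_smul, ← mul_inv, Real.mul_self_sqrt hi.le]
    abel

end Matrix.PosSemidef

section Phi

variable {V : Type*} [Fintype V] [DecidableEq V]

lemma phi_eq_sum_vecMulVec (S : Finset (Finset V)) (γ : Finset V → V → ℝ) :
    phi S γ = ∑ G ∈ S, vecMulVec ((G : Set V).indicator (γ G)) ((G : Set V).indicator (γ G)) := by
  ext i j
  simp only [phi, of_apply, Matrix.sum_apply, vecMulVec_apply, Set.indicator_apply, mem_coe]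
  exact sum_congr rfl fun G _ => by split_ifs <;> simp_all

lemma phi_update {S : Finset (Finset V)} {G₀ : Finset V} (hG₀ : G₀ ∈ S) {v : V → ℝ}
    (hv : Function.support v ⊆ G₀) (γ : Finset V → V → ℝ) :
    phi S (Function.update γ G₀ v) = vecMulVec v v + phi (S.erase G₀) γ := by
  rw [phi_eq_sum_vecMulVec, phi_eq_sum_vecMulVec, ← add_sum_erase _ _ hG₀,
    Function.update_self, Set.indicator_eq_self.mpr hv]
  congr 1
  refine sum_congr rfl fun G hG => ?_
  rw [Function.update_of_ne (ne_of_mem_erase hG)]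

/-- The support of a matrix is its set of nonzero rows; for a symmetric matrix, rows vanishing
outside `G` means that all entries outside `G × G` vanish. -/
def IsPosSemidefSupportedOn (S : Finset (Finset V)) (M : Finset V → Matrix V V ℝ) : Prop :=
  ∀ G ∈ S, (M G).PosSemidef ∧ Function.support (M G) ⊆ G

lemma exists_vecMulVec_add_sum_erase {S : Finset (Finset V)} (hS : IsLowerSet (S : Set (Finset V)))
    {G₀ : Finset V} (hG₀ : G₀ ∈ S) {M : Finset V → Matrix V V ℝ}
    (hM : IsPosSemidefSupportedOn S M) :
    ∃ v : V → ℝ, Function.support v ⊆ G₀ ∧ ∃ N : Finset V → Matrix V V ℝ,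
      IsPosSemidefSupportedOn (S.erase G₀) N ∧
      ∑ G ∈ S, M G = vecMulVec v v + ∑ G ∈ S.erase G₀, N G := by
  rw [← add_sum_erase S M hG₀]
  rcases G₀.eq_empty_or_nonempty with rfl | ⟨i, hi⟩
  · have hM₀ : M ∅ = 0 := Function.support_eq_empty_iff.mp
      (Set.subset_empty_iff.mp (by simpa using (hM ∅ hG₀).2))
    exact ⟨0, by simp, M, fun G hG => hM G (mem_of_mem_erase hG), by simp [hM₀]⟩
  obtain ⟨v, hv, M', hM', hM'G, hMeq⟩ := (hM G₀ hG₀).1.exists_eq_vecMulVec_add (hM G₀ hG₀).2 i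
  set G₁ := G₀.erase i
  have hG₁ : G₁ ∈ S.erase G₀ :=
    mem_erase.mpr ⟨(erase_ssubset hi).ne, hS (erase_subset i G₀) hG₀⟩
  refine ⟨v, hv, Function.update M G₁ (M G₁ + M'), fun G hG => ?_, ?_⟩
  · rcases eq_or_ne G G₁ with rfl | hne
    · have hMG₁ := hM _ (mem_of_mem_erase hG)
      rw [Function.update_self]
      exact ⟨hMG₁.1.add hM', (Function.support_add _ _).trans (Set.union_subset hMG₁.2 hM'G)⟩
    · rw [Function.update_of_ne hne]
      exact hM G (mem_of_mem_erase hG)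
  · rw [sum_update_of_mem hG₁, sdiff_singleton_eq_erase, hMeq, ← add_sum_erase _ M hG₁]
    abel

lemma exists_phi_eq_sum {S : Finset (Finset V)} (hS : IsLowerSet (S : Set (Finset V)))
    {M : Finset V → Matrix V V ℝ} (hM : IsPosSemidefSupportedOn S M) :
    ∃ γ, phi S γ = ∑ G ∈ S, M G := by
  induction S using Finset.strongInduction generalizing M with
  | H S ih =>
  rcases S.eq_empty_or_nonempty with rfl | hne
  · exact ⟨0, by simp [phi_eq_sum_vecMulVec]⟩
  obtain ⟨G₀, hG₀⟩ := S.exists_maximal hne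
  obtain ⟨v, hv, N, hN, hsum⟩ := exists_vecMulVec_add_sum_erase hS hG₀.prop hM
  have hS' : IsLowerSet (S.erase G₀ : Set (Finset V)) := by
    rw [coe_erase]
    exact hS.erase fun G hG hle => hG₀.eq_of_ge hG hle
  obtain ⟨γ, hγ⟩ := ih _ (erase_ssubset hG₀.prop) hS' hN
  exact ⟨Function.update γ G₀ v, by rw [phi_update hG₀.prop hv, hγ, hsum]⟩

lemma sum_vecMulVec_mem_phiImage {ι : Type*} {S : Finset (Finset V)} (hS : IsLowerSet (S : Set (Finset V))) (s : Finset ι)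
    (f : ι → Finset V) (hf : ∀ k ∈ s, f k ∈ S) (w : ι → V → ℝ)
    (hw : ∀ k ∈ s, Function.support (w k) ⊆ f k) :
    ∑ k ∈ s, vecMulVec (w k) (w k) ∈ phiImage S := by
  set M : Finset V → Matrix V V ℝ := fun G => ∑ k ∈ s with f k = G, vecMulVec (w k) (w k)
  have hM : IsPosSemidefSupportedOn S M := by
    refine fun G _ => ⟨posSemidef_sum _ fun k _ => ?_, fun j hj => ?_⟩
    · simpa using posSemidef_vecMulVec_self_star (w k)
    · by_contra hjG
      refine hj ((Finset.sum_apply j _ _).trans (Finset.sum_eq_zero fun k hk => ?_))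
      obtain ⟨hks, rfl⟩ := mem_filter.mp hk
      have hwkj : w k j = 0 := Function.notMem_support.mp (hjG ∘ (hw k hks ·))
      ext l
      simp [vecMulVec_apply, hwkj]
  obtain ⟨γ, hγ⟩ := exists_phi_eq_sum hS hM
  exact ⟨γ, hγ.trans (sum_fiberwise_of_maps_to hf _)⟩

end Phi

section InducedSubcomplex

variable {V : Type*} [DecidableEq V] (Δ : Finset (Finset V)) (A : Finset V)

lemma mem_image_subtype_filter_subset_iff {T : Finset A} :
    T ∈ (Δ.filter fun F => F ⊆ A).image (Finset.subtype (· ∈ A)) ↔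
      T.map (Function.Embedding.subtype _) ∈ Δ := by
  constructor
  · intro h
    obtain ⟨F, hF, rfl⟩ := mem_image.mp h
    obtain ⟨hFΔ, hFA⟩ := mem_filter.mp hF
    rw [subtype_map_of_mem hFA]
    exact hFΔ
  · intro h
    refine mem_image.mpr ⟨_, mem_filter.mpr ⟨h, fun x hx => property_of_mem_map_subtype T hx⟩, ?_⟩
    ext a
    simp

variable {Δ}

lemma IsLowerSet.image_subtype_filter_subset (hΔ : IsLowerSet (Δ : Set (Finset V))) :
    IsLowerSet (((Δ.filter fun F => F ⊆ A).image (Finset.subtype (· ∈ A))) : Set (Finset A)) := by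
  intro T T' hle hT
  rw [mem_coe, mem_image_subtype_filter_subset_iff] at hT ⊢
  exact hΔ (map_subset_map.mpr hle) hT

lemma subtype_mem_image_subtype_filter_subset (hΔ : IsLowerSet (Δ : Set (Finset V)))
    {F : Finset V} (hF : F ∈ Δ) :
    F.subtype (· ∈ A) ∈ (Δ.filter fun F => F ⊆ A).image (Finset.subtype (· ∈ A)) := by
  rw [mem_image_subtype_filter_subset_iff, subtype_map]
  exact hΔ (filter_subset _ F) hF

end InducedSubcomplex

theorem submatrix_mem_image_induced_subcomplex_general (m : ℕ)
    (Δ : Finset (Finset (Fin m))) (hΔ : IsSimplicialComplex Δ)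
    (A : Finset (Fin m))
    (S : Matrix (Fin m) (Fin m) ℝ) (hS : S ∈ phiImage Δ) :
    S.submatrix (fun a : ↥A => (a : Fin m)) (fun a : ↥A => (a : Fin m)) ∈
      phiImage ((Δ.filter fun F => F ⊆ A).image (Finset.subtype (· ∈ A))) := by
  obtain ⟨γ, rfl⟩ := hS
  have hΔlower : IsLowerSet (Δ : Set (Finset (Fin m))) := fun F F' hle hF => hΔ.1 F hF F' hle
  set w : Finset (Fin m) → A → ℝ := fun F a => (F : Set (Fin m)).indicator (γ F) a
  have hsub : (phi Δ γ).submatrix (fun a : ↥A => (a : Fin m)) (fun a : ↥A => (a : Fin m)) =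
      ∑ F ∈ Δ, vecMulVec (w F) (w F) := by
    ext a b
    simp [phi_eq_sum_vecMulVec, Matrix.sum_apply, vecMulVec_apply, w]
  rw [hsub]
  refine sum_vecMulVec_mem_phiImage (hΔlower.image_subtype_filter_subset A) Δ _
    (fun F hF => subtype_mem_image_subtype_filter_subset A hΔlower hF) w fun F _ a ha => ?_
  exact mem_subtype.mpr (Set.mem_of_indicator_ne_zero ha)

/-- if `Σ` is in the image of `φ_Δ` and `A ⊊ [m]`, then the
principal submatrix `Σ_{A,A}` is in the image of `φ_{Δ_A}`, where
`Δ_A = {F ∈ Δ : F ⊆ A}` is the induced subcomplex, regarded as a simplicial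
complex on `A`. -/
theorem submatrix_mem_image_induced_subcomplex (m : ℕ)
    (Δ : Finset (Finset (Fin m))) (hΔ : IsSimplicialComplex Δ)
    (A : Finset (Fin m)) (hA : A ≠ Finset.univ)
    (S : Matrix (Fin m) (Fin m) ℝ) (hS : S ∈ phiImage Δ) :
    S.submatrix (fun a : ↥A => (a : Fin m)) (fun a : ↥A => (a : Fin m)) ∈
      phiImage ((Δ.filter fun F => F ⊆ A).image (Finset.subtype (· ∈ A))) :=
  submatrix_mem_image_induced_subcomplex_general m Δ hΔ A S hS
end

section
/- Let m ≥ 3 and Σ = (σ_ij) ∈ S⪰0^m(C_m). The following are equivalent: (1) Σ lies in the image of φ_{C_m}; (2) Σ^{(ij)} is positive semidefinite for every edge {i,j} of C_m; (3) Σ^{(ij)} is positive semidefinite for some edge {i,j} of C_m. Here Σ^{(ij)} is obtained from Σ by negating its (i,j) and (j,i) entries. -/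
open Matrix

/-- The edge complex of the cycle `C_m`, with faces the empty set, the
singletons, and the edges `{i, i+1}` (indices modulo `m`). -/
def cycleComplex (m : ℕ) [NeZero m] : Finset (Finset (Fin m)) :=
  {∅} ∪ Finset.univ.image (fun i : Fin m => ({i} : Finset (Fin m))) ∪
    Finset.univ.image (fun i : Fin m => ({i, i + 1} : Finset (Fin m)))

/-- The cone `S⪰0^m(C_m)` of positive semidefinite matrices with zeros at the
non-edges of the cycle `C_m`. -/
def cyclePSDCone (m : ℕ) [NeZero m] : Set (Matrix (Fin m) (Fin m) ℝ) :=
  {S | S.PosSemidef ∧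
    ∀ i j : Fin m, i ≠ j → j ≠ i + 1 → i ≠ j + 1 → S i j = 0}

/-- `Σ^{(ij)}`: the matrix obtained from `S` by negating the `(i,j)` and
`(j,i)` entries. -/
def negEntry {V : Type*} [DecidableEq V] (S : Matrix V V ℝ) (i j : V) :
    Matrix V V ℝ :=
  Matrix.of fun a b =>
    if (a = i ∧ b = j) ∨ (a = j ∧ b = i) then -S a b else S a b

/-!
A symmetric matrix `Σ` supported on `C_m` lies in the image of `φ_{C_m}` iff there are `b, c`
with `c_i b_{i+1} = σ_{i,i+1}` and `b_i² + c_i² ≤ σ_ii` (take `b_i = γ_{i,{i-1,i}}`,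
`c_i = γ_{i,{i,i+1}}`, and let `γ_{i,{i}}` absorb the slack). This condition only sees
`|σ_{i,i+1}|`, so it survives negating an edge entry, and everything in the image is positive
semidefinite.

Conversely, conjugating by a diagonal sign matrix can make every edge entry `-|σ_{i,i+1}|`
exactly when the product of the edge signs around the cycle allows it; negating one edge flips
that product, so one of `Σ`, `Σ^{(i,i+1)}` yields a positive semidefinite `A` with the diagonal
of `Σ` and edge entries `-r_i = -|σ_{i,i+1}|`. For `ε > 0`, `A + εI` is a positive definite
Z-matrix, so `(A + εI) x = 1` has a positive solution, and `b_i = √(r_{i-1} x_{i-1} / x_i)`,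
`c_i = √(r_i x_{i+1} / x_i)` satisfy the conditions up to `ε`. Compactness lets `ε → 0`.
-/

open Finset

lemma phi_apply_comm {V : Type*} [Fintype V] [DecidableEq V] (Δ : Finset (Finset V))
    (γ : Finset V → V → ℝ) (i j : V) : phi Δ γ i j = phi Δ γ j i := by
  simp only [phi, of_apply, and_comm, mul_comm]

lemma phi_posSemidef {V : Type*} [Fintype V] [DecidableEq V] (Δ : Finset (Finset V))
    (γ : Finset V → V → ℝ) : (phi Δ γ).PosSemidef := by
  let v : Finset V → V → ℝ := fun F i => if i ∈ F then γ F i else 0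
  have hsum : phi Δ γ = ∑ F ∈ Δ, vecMulVec (v F) (star (v F)) := by
    ext i j
    simp only [phi, of_apply, Matrix.sum_apply, vecMulVec_apply, star_trivial, v, ite_mul,
      mul_ite, mul_zero, zero_mul, ite_and]
    exact sum_congr rfl fun F _ => by split_ifs <;> rfl
  rw [hsum]
  exact posSemidef_sum _ fun F _ => posSemidef_vecMulVec_self_star (v F)

lemma posSemidef_of_mem_phiImage {V : Type*} [Fintype V] [DecidableEq V]
    {Δ : Finset (Finset V)} {S : Matrix V V ℝ} (h : S ∈ phiImage Δ) : S.PosSemidef := by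
  obtain ⟨γ, rfl⟩ := h
  exact phi_posSemidef Δ γ

section NegEntry

variable {V : Type*} [DecidableEq V] (S : Matrix V V ℝ)

lemma negEntry_apply_self {i j : V} (hij : i ≠ j) (a : V) : negEntry S i j a a = S a a := by
  rw [negEntry, of_apply, if_neg]
  rintro (⟨rfl, rfl⟩ | ⟨rfl, rfl⟩) <;> exact hij rfl

lemma abs_negEntry_apply (i j a b : V) : |negEntry S i j a b| = |S a b| := by
  rw [negEntry, of_apply]
  split_ifs <;> simp only [abs_neg]

lemma negEntry_apply_eq_zero {i j a b : V} (h : S a b = 0) : negEntry S i j a b = 0 := by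
  simp [negEntry, h]

variable {S}

lemma Matrix.IsSymm.negEntry (hS : S.IsSymm) (i j : V) : (negEntry S i j).IsSymm :=
  IsSymm.ext fun a b => by simp only [_root_.negEntry, of_apply, hS.apply a b, or_comm, and_comm]

end NegEntry

section ZMatrix

variable {n : Type*} [Fintype n]

lemma dotProduct_mulVec_abs_le {B : Matrix n n ℝ} (hoff : ∀ i j, i ≠ j → B i j ≤ 0)
    (x : n → ℝ) :
    (fun i => |x i|) ⬝ᵥ B *ᵥ (fun i => |x i|) ≤ x ⬝ᵥ B *ᵥ x := by
  simp only [dotProduct, mulVec, mul_sum]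
  refine sum_le_sum fun i _ => sum_le_sum fun j _ => ?_
  rcases eq_or_ne i j with rfl | hij
  · exact le_of_eq (by linear_combination B i i * abs_mul_abs_self (x i))
  · nlinarith [hoff i j hij, le_abs_self (x i * x j), abs_mul (x i) (x j)]

variable [DecidableEq n]

lemma Matrix.PosDef.exists_pos_mulVec_eq_one {B : Matrix n n ℝ} (hB : B.PosDef)
    (hoff : ∀ i j, i ≠ j → B i j ≤ 0) : ∃ x : n → ℝ, (∀ i, 0 < x i) ∧ B *ᵥ x = 1 := by
  set x := B⁻¹ *ᵥ 1
  set y : n → ℝ := fun i => |x i|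
  have hx : B *ᵥ x = 1 := by
    rw [mulVec_mulVec, mul_nonsing_inv _ ((isUnit_iff_isUnit_det B).mp hB.isUnit), one_mulVec]
  have hsymm : y ⬝ᵥ B *ᵥ x = x ⬝ᵥ B *ᵥ y := by
    rw [dotProduct_mulVec, ← mulVec_transpose, (isHermitian_iff_isSymm.mp hB.isHermitian).eq,
      dotProduct_comm]
  have hsum : x ⬝ᵥ B *ᵥ x ≤ y ⬝ᵥ B *ᵥ x := by
    simp only [hx, dotProduct_one]
    exact sum_le_sum fun i _ => le_abs_self (x i)
  -- `z ↦ zᵀBz - 2 ∑ z` is strictly convex with minimiser `x`, and it is no larger at `|x|`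
  have hyx : y = x := by
    by_contra hne
    have hpos := hB.dotProduct_mulVec_pos (sub_ne_zero.mpr hne)
    simp only [star_trivial, mulVec_sub, sub_dotProduct, dotProduct_sub] at hpos
    linarith [dotProduct_mulVec_abs_le hoff x]
  refine ⟨x, fun i => ?_, hx⟩
  have hx_nonneg : ∀ j, 0 ≤ x j := fun j => (congrFun hyx j).symm ▸ abs_nonneg (x j)
  refine (hx_nonneg i).lt_of_ne fun hxi => ?_
  have hrow : ∑ j, B i j * x j ≤ 0 := sum_nonpos fun j _ => by
    rcases eq_or_ne i j with rfl | hij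
    · rw [← hxi, mul_zero]
    · exact mul_nonpos_of_nonpos_of_nonneg (hoff i j hij) (hx_nonneg j)
  have h1 : ∑ j, B i j * x j = 1 := congrFun hx i
  linarith

end ZMatrix

lemma Fin.exists_mul_add_one_eq_of_prod_eq_one {M : Type*} [CommMonoid M] {m : ℕ}
    [NeZero m] (s : Fin m → M) (hs : ∏ i, s i = 1) :
    ∃ χ : Fin m → M, ∀ i, χ (i + 1) = χ i * s i := by
  obtain ⟨n, rfl⟩ := Nat.exists_eq_succ_of_ne_zero (NeZero.ne m)
  refine ⟨fun i => Fin.partialProd s i.castSucc, fun i => ?_⟩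
  dsimp only
  induction i using Fin.lastCases with
  | last =>
    rw [Fin.last_add_one, ← Fin.partialProd_succ, Fin.succ_last, Fin.castSucc_zero,
      Fin.partialProd_zero, ← hs, Fin.partialProd, Fin.val_last,
      List.take_of_length_le (by simp), List.prod_ofFn]
  | cast j =>
    rw [Fin.coeSucc_eq_succ, ← Fin.succ_castSucc, Fin.partialProd_succ]

section Cycle

variable {m : ℕ} [NeZero m]

lemma Fin.add_one_ne_self (hm : 2 ≤ m) (i : Fin m) : i + 1 ≠ i := by
  rw [Ne, add_eq_left, Fin.one_eq_zero_iff]; omega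

lemma Fin.add_one_add_one_ne_self (hm : 3 ≤ m) (i : Fin m) : i + 1 + 1 ≠ i := by
  rw [Ne, add_assoc, add_eq_left]
  simp [Fin.ext_iff, Fin.val_add, Nat.mod_eq_of_lt, show 1 < m by omega, show 2 < m by omega]

lemma Fin.sub_one_ne_self (hm : 2 ≤ m) (i : Fin m) : i - 1 ≠ i := fun h =>
  Fin.add_one_ne_self hm (i - 1) (by rw [sub_add_cancel, h])

lemma Fin.sub_one_ne_add_one (hm : 3 ≤ m) (i : Fin m) : i - 1 ≠ i + 1 := fun h =>
  Fin.add_one_add_one_ne_self hm (i - 1) (by rw [sub_add_cancel]; exact h.symm)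

lemma pair_add_one_injective (hm : 3 ≤ m) :
    Function.Injective fun i : Fin m => ({i, i + 1} : Finset (Fin m)) := by
  intro i j hij
  simp only at hij
  have hi : i ∈ ({j, j + 1} : Finset (Fin m)) := hij ▸ mem_insert_self i _
  have hj : j ∈ ({i, i + 1} : Finset (Fin m)) := hij ▸ mem_insert_self j _
  simp only [mem_insert, mem_singleton] at hi hj
  rcases hi with hi | rfl
  · exact hi
  · rcases hj with hj | hj
    · exact (Fin.add_one_ne_self (by omega) j hj.symm).elim
    · exact (Fin.add_one_add_one_ne_self hm j hj.symm).elim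

lemma singleton_ne_pair_add_one (hm : 2 ≤ m) (i j : Fin m) :
    ({i} : Finset (Fin m)) ≠ {j, j + 1} := fun h => by
  have hcard := congrArg card h
  rw [card_singleton, card_pair (Fin.add_one_ne_self hm j).symm] at hcard
  omega

lemma sum_cycleComplex (hm : 3 ≤ m) (f : Finset (Fin m) → ℝ) (hf : f ∅ = 0) :
    ∑ F ∈ cycleComplex m, f F = ∑ i, f {i} + ∑ i, f {i, i + 1} := by
  have hsingleton : Disjoint {∅} (univ.image fun i : Fin m => ({i} : Finset (Fin m))) := by
    simp [eq_comm]
  have hpair : Disjoint ({∅} ∪ univ.image fun i : Fin m => ({i} : Finset (Fin m)))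
      (univ.image fun i : Fin m => ({i, i + 1} : Finset (Fin m))) := by
    simp only [disjoint_right, mem_image, mem_union, mem_singleton, mem_univ, true_and]
    rintro _ ⟨i, rfl⟩ (h | ⟨j, h⟩)
    · exact insert_ne_empty _ _ h
    · exact singleton_ne_pair_add_one (by omega) j i h
  rw [cycleComplex, sum_union hpair, sum_union hsingleton, sum_singleton, hf, zero_add,
    sum_image fun i _ j _ h => singleton_injective h,
    sum_image fun i _ j _ h => pair_add_one_injective hm h]

lemma phi_cycleComplex_apply_self (hm : 3 ≤ m) (γ : Finset (Fin m) → Fin m → ℝ) (i : Fin m) :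
    phi (cycleComplex m) γ i i = γ {i} i ^ 2 + γ {i - 1, i} i ^ 2 + γ {i, i + 1} i ^ 2 := by
  have hedges :
      univ.filter (fun k : Fin m => i ∈ ({k, k + 1} : Finset (Fin m))) = {i - 1, i} := by
    ext k
    simp [eq_comm, eq_sub_iff_add_eq, or_comm]
  rw [phi, of_apply, sum_cycleComplex hm _ (by simp)]
  simp only [and_self, mem_singleton, sum_ite_eq, mem_univ, if_true]
  rw [← sum_filter, hedges, sum_pair (Fin.sub_one_ne_self (by omega) i), sub_add_cancel]
  ring

lemma phi_cycleComplex_apply_of_ne (hm : 3 ≤ m) (γ : Finset (Fin m) → Fin m → ℝ)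
    {i j : Fin m} (hij : i ≠ j) :
    phi (cycleComplex m) γ i j = ∑ k, if (k = i ∧ j = i + 1) ∨ (k = j ∧ i = j + 1)
      then γ {k, k + 1} i * γ {k, k + 1} j else 0 := by
  have hsingletons :
      ∀ k : Fin m, ¬(i ∈ ({k} : Finset (Fin m)) ∧ j ∈ ({k} : Finset (Fin m))) := by
    rintro k ⟨hi, hj⟩
    exact hij ((mem_singleton.mp hi).trans (mem_singleton.mp hj).symm)
  have hedges : ∀ k : Fin m,
      i ∈ ({k, k + 1} : Finset (Fin m)) ∧ j ∈ ({k, k + 1} : Finset (Fin m)) ↔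
        (k = i ∧ j = i + 1) ∨ (k = j ∧ i = j + 1) := by
    intro k
    simp only [mem_insert, mem_singleton]
    constructor
    · rintro ⟨rfl | rfl, rfl | rfl⟩ <;> simp_all
    · rintro (⟨rfl, rfl⟩ | ⟨rfl, rfl⟩) <;> simp
  rw [phi, of_apply, sum_cycleComplex hm _ (by simp)]
  simp only [hsingletons, if_false, sum_const_zero, zero_add, hedges]

lemma phi_cycleComplex_apply_add_one (hm : 3 ≤ m) (γ : Finset (Fin m) → Fin m → ℝ)
    (i : Fin m) :
    phi (cycleComplex m) γ i (i + 1) = γ {i, i + 1} i * γ {i, i + 1} (i + 1) := by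
  rw [phi_cycleComplex_apply_of_ne hm γ (Fin.add_one_ne_self (by omega) i).symm]
  have hwrap : i ≠ i + 1 + 1 := (Fin.add_one_add_one_ne_self hm i).symm
  simp [hwrap]

def IsCycleSupported (S : Matrix (Fin m) (Fin m) ℝ) : Prop :=
  ∀ i j : Fin m, i ≠ j → j ≠ i + 1 → i ≠ j + 1 → S i j = 0

def CycleFactorable (d e : Fin m → ℝ) : Prop :=
  ∃ b c : Fin m → ℝ, (∀ i, c i * b (i + 1) = e i) ∧ ∀ i, b i ^ 2 + c i ^ 2 ≤ d i

lemma CycleFactorable.of_abs_eq {d e e' : Fin m → ℝ} (h : CycleFactorable d e)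
    (he : ∀ i, |e' i| = |e i|) : CycleFactorable d e' := by
  obtain ⟨b, c, hedge, hdiag⟩ := h
  refine ⟨b, fun i => if e' i = e i then c i else -c i, fun i => ?_, fun i => ?_⟩
  · dsimp only
    split_ifs with h
    · rw [hedge, h]
    · rw [neg_mul, hedge, (abs_eq_abs.mp (he i)).resolve_left h]
  · dsimp only
    split_ifs <;> simpa using hdiag i

lemma isCycleSupported_phi (hm : 3 ≤ m) (γ : Finset (Fin m) → Fin m → ℝ) :
    IsCycleSupported (phi (cycleComplex m) γ) :=
  fun i j hij hji hij' => by simp [phi_cycleComplex_apply_of_ne hm γ hij, hji, hij']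

lemma cycleFactorable_of_mem_phiImage (hm : 3 ≤ m) {S : Matrix (Fin m) (Fin m) ℝ}
    (h : S ∈ phiImage (cycleComplex m)) :
    CycleFactorable (fun i => S i i) (fun i => S i (i + 1)) := by
  obtain ⟨γ, rfl⟩ := h
  refine ⟨fun i => γ {i - 1, i} i, fun i => γ {i, i + 1} i, fun i => ?_, fun i => ?_⟩
  · simp only [add_sub_cancel_right, phi_cycleComplex_apply_add_one hm]
  · dsimp only
    rw [phi_cycleComplex_apply_self hm]
    nlinarith [sq_nonneg (γ {i} i)]

lemma mem_phiImage_of_cycleFactorable (hm : 3 ≤ m) {S : Matrix (Fin m) (Fin m) ℝ}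
    (hsymm : S.IsSymm) (hsupp : IsCycleSupported S)
    (h : CycleFactorable (fun i => S i i) (fun i => S i (i + 1))) :
    S ∈ phiImage (cycleComplex m) := by
  obtain ⟨b, c, hedge, hdiag⟩ := h
  let γ : Finset (Fin m) → Fin m → ℝ := fun F i =>
    if F = {i} then √(S i i - b i ^ 2 - c i ^ 2)
    else if F = {i, i + 1} then c i
    else if F = {i - 1, i} then b i else 0
  have hγ_left : ∀ i, γ {i - 1, i} i = b i := by
    intro i
    have hpair : ({i - 1, i} : Finset (Fin m)) = {i - 1, i - 1 + 1} := by rw [sub_add_cancel]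
    have hne_singleton : ({i - 1, i} : Finset (Fin m)) ≠ {i} := by
      rw [hpair]
      exact (singleton_ne_pair_add_one (by omega) i (i - 1)).symm
    have hne_succ : ({i - 1, i} : Finset (Fin m)) ≠ {i, i + 1} := fun h' =>
      Fin.sub_one_ne_self (by omega) i (pair_add_one_injective hm (hpair.symm.trans h'))
    simp [γ, hne_singleton, hne_succ]
  have hγ_right : ∀ i, γ {i, i + 1} i = c i := by
    intro i
    simp [γ, (singleton_ne_pair_add_one (by omega) i i).symm]
  have hγ_succ : ∀ i, γ {i, i + 1} (i + 1) = b (i + 1) := by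
    intro i
    simpa using hγ_left (i + 1)
  refine ⟨γ, ?_⟩
  ext i j
  by_cases hij : i = j
  · subst hij
    rw [phi_cycleComplex_apply_self hm, hγ_left, hγ_right]
    simp only [γ, if_true]
    rw [Real.sq_sqrt (by linarith [hdiag i])]
    ring
  by_cases hji : j = i + 1
  · subst hji
    rw [phi_cycleComplex_apply_add_one hm, hγ_right, hγ_succ, hedge]
  by_cases hij' : i = j + 1
  · subst hij'
    rw [phi_apply_comm, phi_cycleComplex_apply_add_one hm, hγ_right, hγ_succ, hedge,
      hsymm.apply]
  rw [isCycleSupported_phi hm γ i j hij hji hij', hsupp i j hij hji hij']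

lemma cycleFactorable_of_pos_supersolution {d r x : Fin m → ℝ} (hr : ∀ i, 0 ≤ r i)
    (hx : ∀ i, 0 < x i) (h : ∀ i, r (i - 1) * x (i - 1) + r i * x (i + 1) ≤ d i * x i) :
    CycleFactorable d r := by
  refine ⟨fun i => √(r (i - 1) * x (i - 1) / x i), fun i => √(r i * x (i + 1) / x i),
    fun i => ?_, fun i => ?_⟩
  · have hquot : ∀ j k, 0 ≤ r j * x k / x i := fun j k =>
      div_nonneg (mul_nonneg (hr j) (hx k).le) (hx i).le
    dsimp only
    rw [add_sub_cancel_right, ← Real.sqrt_mul (hquot i (i + 1)),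
      show r i * x (i + 1) / x i * (r i * x i / x (i + 1)) = r i ^ 2 by
        field_simp [(hx i).ne', (hx (i + 1)).ne'],
      Real.sqrt_sq (hr i)]
  · have hquot : ∀ j k, 0 ≤ r j * x k / x i := fun j k =>
      div_nonneg (mul_nonneg (hr j) (hx k).le) (hx i).le
    rw [Real.sq_sqrt (hquot _ _), Real.sq_sqrt (hquot _ _), ← add_div, div_le_iff₀ (hx i)]
    exact h i

lemma IsCycleSupported.mulVec_apply (hm : 3 ≤ m) {A : Matrix (Fin m) (Fin m) ℝ}
    (hA : IsCycleSupported A) (x : Fin m → ℝ) (i : Fin m) :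
    (A *ᵥ x) i = A i (i - 1) * x (i - 1) + A i i * x i + A i (i + 1) * x (i + 1) := by
  have hsub : ({i - 1, i, i + 1} : Finset (Fin m)) ⊆ univ := subset_univ _
  rw [mulVec, dotProduct, ← sum_subset hsub, sum_insert, sum_pair, add_assoc]
  · exact (Fin.add_one_ne_self (by omega) i).symm
  · simp [Fin.sub_one_ne_self (by omega) i, Fin.sub_one_ne_add_one hm i]
  · intro j _ hj
    simp only [mem_insert, mem_singleton, not_or] at hj
    obtain ⟨hj₁, hj₂, hj₃⟩ := hj
    rw [hA i j (Ne.symm hj₂) hj₃ (fun h => hj₁ (by rw [h, add_sub_cancel_right])), zero_mul]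

lemma cycleFactorable_add_of_posSemidef (hm : 3 ≤ m) {A : Matrix (Fin m) (Fin m) ℝ}
    (hA : A.PosSemidef) (hsupp : IsCycleSupported A) (hedge : ∀ i, A i (i + 1) ≤ 0)
    {ε : ℝ} (hε : 0 < ε) : CycleFactorable (fun i => A i i + ε) (fun i => -A i (i + 1)) := by
  have hsymm : A.IsSymm := isHermitian_iff_isSymm.mp hA.isHermitian
  have hoff : ∀ i j, i ≠ j → (A + ε • 1) i j ≤ 0 := by
    intro i j hij
    rw [Matrix.add_apply, Matrix.smul_apply, one_apply_ne hij, smul_zero, add_zero]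
    by_cases hji : j = i + 1
    · exact hji ▸ hedge i
    by_cases hij' : i = j + 1
    · exact hij' ▸ hsymm.apply j (j + 1) ▸ hedge j
    · exact (hsupp i j hij hji hij').le
  obtain ⟨x, hx, hsol⟩ :=
    (PosDef.posSemidef_add hA (PosDef.one.smul hε)).exists_pos_mulVec_eq_one hoff
  refine cycleFactorable_of_pos_supersolution (fun i => neg_nonneg.mpr (hedge i)) hx fun i => ?_
  have hrow := congrFun hsol i
  rw [add_mulVec, smul_mulVec, one_mulVec, Pi.add_apply, Pi.smul_apply, hsupp.mulVec_apply hm,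
    hsymm.apply (i - 1) i, Pi.one_apply, smul_eq_mul] at hrow
  rw [sub_add_cancel]
  nlinarith [hx i]

lemma CycleFactorable.of_forall_pos_add {d e : Fin m → ℝ}
    (h : ∀ ε > 0, CycleFactorable (fun i => d i + ε) e) : CycleFactorable d e := by
  let K : ℕ → Set ((Fin m → ℝ) × (Fin m → ℝ)) := fun n =>
    {p | (∀ i, p.2 i * p.1 (i + 1) = e i) ∧ ∀ i, p.1 i ^ 2 + p.2 i ^ 2 ≤ d i + 1 / (n + 1)}
  have hanti : ∀ n, K (n + 1) ⊆ K n := by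
    refine fun n p hp => ⟨hp.1, fun i => (hp.2 i).trans ?_⟩
    gcongr
    linarith
  have hne : ∀ n, (K n).Nonempty := fun n => by
    obtain ⟨b, c, hb, hc⟩ := h (1 / (n + 1)) (by positivity)
    exact ⟨(b, c), hb, hc⟩
  have hclosed : ∀ n, IsClosed (K n) := fun n => by
    simp only [K, Set.ofPred_and, Set.ofPred_forall]
    exact (isClosed_iInter fun i => isClosed_eq (by fun_prop) (by fun_prop)).inter
      (isClosed_iInter fun i => isClosed_le (by fun_prop) (by fun_prop))
  have hcompact : IsCompact (K 0) := by
    let R : Fin m → ℝ := fun i => |d i| + 2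
    refine (isCompact_Icc.prod isCompact_Icc : IsCompact (Set.Icc (-R) R ×ˢ Set.Icc (-R) R))
      |>.of_isClosed_subset (hclosed 0) fun p hp => ?_
    have hsq : ∀ i, p.1 i ^ 2 ≤ R i ^ 2 ∧ p.2 i ^ 2 ≤ R i ^ 2 := fun i => by
      have hpi := hp.2 i
      rw [Nat.cast_zero, zero_add, div_one] at hpi
      constructor <;> nlinarith [le_abs_self (d i), abs_nonneg (d i), sq_nonneg (p.1 i),
        sq_nonneg (p.2 i)]
    have hR : ∀ i, 0 ≤ R i := fun i => by positivity
    exact ⟨⟨fun i => (abs_le_of_sq_le_sq' (hsq i).1 (hR i)).1,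
        fun i => (abs_le_of_sq_le_sq' (hsq i).1 (hR i)).2⟩,
      ⟨fun i => (abs_le_of_sq_le_sq' (hsq i).2 (hR i)).1,
        fun i => (abs_le_of_sq_le_sq' (hsq i).2 (hR i)).2⟩⟩
  obtain ⟨p, hp⟩ := IsCompact.nonempty_iInter_of_sequence_nonempty_isCompact_isClosed K hanti hne
    hcompact hclosed
  rw [Set.mem_iInter] at hp
  refine ⟨p.1, p.2, (hp 0).1, fun i => le_of_forall_pos_le_add fun ε hε => ?_⟩
  obtain ⟨n, hn⟩ := exists_nat_one_div_lt hε
  linarith [(hp n).2 i]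

lemma cycleFactorable_of_posSemidef (hm : 3 ≤ m) {A : Matrix (Fin m) (Fin m) ℝ}
    (hA : A.PosSemidef) (hsupp : IsCycleSupported A) (hedge : ∀ i, A i (i + 1) ≤ 0) :
    CycleFactorable (fun i => A i i) (fun i => -A i (i + 1)) :=
  .of_forall_pos_add fun _ hε => cycleFactorable_add_of_posSemidef hm hA hsupp hedge hε

lemma exists_posSemidef_edge_eq_sign_mul {T : Matrix (Fin m) (Fin m) ℝ} (hT : T.PosSemidef)
    (hsupp : IsCycleSupported T) (t : Fin m → ℤˣ) (ht : ∏ i, t i = 1) :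
    ∃ A : Matrix (Fin m) (Fin m) ℝ, A.PosSemidef ∧ IsCycleSupported A ∧
      (∀ i, A i i = T i i) ∧ ∀ i, A i (i + 1) = ((t i : ℤ) : ℝ) * T i (i + 1) := by
  obtain ⟨χ, hχ⟩ := Fin.exists_mul_add_one_eq_of_prod_eq_one t ht
  let D : Matrix (Fin m) (Fin m) ℝ := diagonal fun i => ((χ i : ℤ) : ℝ)
  have hD : ∀ i j, (D * T * D) i j = ((χ i : ℤ) : ℝ) * T i j * ((χ j : ℤ) : ℝ) :=
    fun i j => by simp [D, diagonal_mul, mul_diagonal]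
  have hχ_sq : ∀ i, ((χ i : ℤ) : ℝ) * ((χ i : ℤ) : ℝ) = 1 := fun i => by
    rw [← Int.cast_mul, ← Units.val_mul, Int.units_mul_self, Units.val_one, Int.cast_one]
  refine ⟨D * T * D, ?_, fun i j hij hji hij' => ?_, fun i => ?_, fun i => ?_⟩
  · simpa [D] using hT.conjTranspose_mul_mul_same D
  · rw [hD, hsupp i j hij hji hij', mul_zero, zero_mul]
  · rw [hD]
    linear_combination T i i * hχ_sq i
  · rw [hD, hχ i]
    push_cast
    linear_combination ((t i : ℤ) : ℝ) * T i (i + 1) * hχ_sq i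

lemma exists_posSemidef_edge_eq_neg_abs (hm : 3 ≤ m) {S : Matrix (Fin m) (Fin m) ℝ}
    (hS : S ∈ cyclePSDCone m) (i₀ : Fin m) (hneg : (negEntry S i₀ (i₀ + 1)).PosSemidef) :
    ∃ A : Matrix (Fin m) (Fin m) ℝ, A.PosSemidef ∧ IsCycleSupported A ∧
      (∀ i, A i i = S i i) ∧ ∀ i, A i (i + 1) = -|S i (i + 1)| := by
  let s : Fin m → ℤˣ := fun i => if 0 < S i (i + 1) then -1 else 1
  have hs : ∀ i, ((s i : ℤ) : ℝ) * S i (i + 1) = -|S i (i + 1)| := fun i => by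
    by_cases h : 0 < S i (i + 1)
    · simp [s, h, abs_of_pos h]
    · simp [s, h, abs_of_nonpos (not_lt.mp h)]
  rcases Int.units_eq_one_or (∏ i, s i) with hprod | hprod
  · obtain ⟨A, hA, hsupp, hdiag, hedge⟩ :=
      exists_posSemidef_edge_eq_sign_mul hS.1 hS.2 s hprod
    exact ⟨A, hA, hsupp, hdiag, fun i => (hedge i).trans (hs i)⟩
  -- flipping the sign at `i₀` both fixes the product and compensates the negated entry
  let t : Fin m → ℤˣ := fun i => (if i = i₀ then -1 else 1) * s i
  have ht : ∏ i, t i = 1 := by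
    simp only [t, prod_mul_distrib, prod_ite_eq', mem_univ, if_true, hprod]
    rfl
  obtain ⟨A, hA, hsupp, hdiag, hedge⟩ := exists_posSemidef_edge_eq_sign_mul hneg
    (fun i j hij hji hij' => negEntry_apply_eq_zero S (hS.2 i j hij hji hij')) t ht
  refine ⟨A, hA, hsupp, fun i => (hdiag i).trans (negEntry_apply_self S ?_ i), fun i => ?_⟩
  · exact (Fin.add_one_ne_self (by omega) i₀).symm
  rw [hedge, ← hs]
  by_cases hi : i = i₀
  · subst hi
    simp [t, negEntry]
  · have hwrap : i₀ + 1 + 1 ≠ i₀ := Fin.add_one_add_one_ne_self hm i₀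
    simp only [t, hi, if_false, one_mul]
    rw [negEntry, of_apply, if_neg]
    rintro (⟨h, -⟩ | ⟨rfl, h⟩)
    · exact hi h
    · exact hwrap h

lemma negEntry_mem_phiImage (hm : 3 ≤ m) {S : Matrix (Fin m) (Fin m) ℝ}
    (h : S ∈ phiImage (cycleComplex m)) (i₀ : Fin m) :
    negEntry S i₀ (i₀ + 1) ∈ phiImage (cycleComplex m) := by
  have hfact : CycleFactorable (fun i => S i i) (fun i => negEntry S i₀ (i₀ + 1) i (i + 1)) :=
    (cycleFactorable_of_mem_phiImage hm h).of_abs_eq fun i => abs_negEntry_apply S _ _ _ _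
  have hne : i₀ ≠ i₀ + 1 := (Fin.add_one_ne_self (by omega) i₀).symm
  have hsymm : S.IsSymm := isHermitian_iff_isSymm.mp (posSemidef_of_mem_phiImage h).isHermitian
  obtain ⟨γ, rfl⟩ := h
  refine mem_phiImage_of_cycleFactorable hm (hsymm.negEntry _ _) (fun i j hij hji hij' =>
    negEntry_apply_eq_zero _ (isCycleSupported_phi hm γ i j hij hji hij')) ?_
  simpa only [negEntry_apply_self _ hne] using hfact

lemma cycleFactorable_of_posSemidef_negEntry (hm : 3 ≤ m) {S : Matrix (Fin m) (Fin m) ℝ}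
    (hS : S ∈ cyclePSDCone m) (i₀ : Fin m) (hneg : (negEntry S i₀ (i₀ + 1)).PosSemidef) :
    CycleFactorable (fun i => S i i) (fun i => S i (i + 1)) := by
  obtain ⟨A, hA, hsupp, hdiag, hedge⟩ := exists_posSemidef_edge_eq_neg_abs hm hS i₀ hneg
  have hfact := cycleFactorable_of_posSemidef hm hA hsupp fun i => by
    rw [hedge]
    exact neg_nonpos.mpr (abs_nonneg _)
  simp only [hdiag, hedge, neg_neg] at hfact
  exact hfact.of_abs_eq fun i => (abs_abs _).symm

end Cycle

/-- for `Σ ∈ S⪰0^m(C_m)` the following are equivalent: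
(1) `Σ ∈ im(φ_{C_m})`; (2) `Σ^{(ij)}` is positive semidefinite for every edge
`{i, i+1}` of `C_m`; (3) `Σ^{(ij)}` is positive semidefinite for some edge
of `C_m`. -/
theorem mem_image_cycle_tfae (m : ℕ) [NeZero m] (hm : 3 ≤ m)
    (S : Matrix (Fin m) (Fin m) ℝ) (hS : S ∈ cyclePSDCone m) :
    (S ∈ phiImage (cycleComplex m) ↔
      ∀ i : Fin m, (negEntry S i (i + 1)).PosSemidef) ∧
    (S ∈ phiImage (cycleComplex m) ↔
      ∃ i : Fin m, (negEntry S i (i + 1)).PosSemidef) := by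
  have forward (h : S ∈ phiImage (cycleComplex m)) (i : Fin m) :
      (negEntry S i (i + 1)).PosSemidef :=
    posSemidef_of_mem_phiImage (negEntry_mem_phiImage hm h i)
  have backward : (∃ i : Fin m, (negEntry S i (i + 1)).PosSemidef) →
      S ∈ phiImage (cycleComplex m) := fun ⟨i, hi⟩ =>
    mem_phiImage_of_cycleFactorable hm (isHermitian_iff_isSymm.mp hS.1.isHermitian) hS.2
      (cycleFactorable_of_posSemidef_negEntry hm hS i hi)
  exact ⟨⟨forward, fun h => backward ⟨0, h 0⟩⟩, ⟨fun h => ⟨0, forward h 0⟩, backward⟩⟩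
end
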